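/- arXiv:1405.1593 — 4 statements merged into one kernel-verified Lean document; each statement's English description precedes it below -/
import Mathlib

section
/- Equivalence of nonanticipativity conditions MC2 and MC3 (Lemma 2, part of): the family of conditional-independence conditions "for every i = 0,1,...,n−1, Y_i is conditionally independent of (X_{i+1}, X_{i+2}, ..., X_n) given (X_0,...,X_i, Y_0,...,Y_{i−1})" holds if and only if the family "for every i = 0,1,...,n−1, (Y_0,...,Y_i) is conditionally independent of X_{i+1} given (X_0,...,X_i)" holds. -/
/-!
Conditional independence `𝓐 ⫫ 𝓑 | 𝓒` holds iff `P[A | 𝓑 ⊔ 𝓒] = P[A | 𝓒]` for every `A ∈ 𝓐`.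
With this characterisation one gets the chain rule
`𝓐 ⫫ 𝓑 ⊔ 𝓓 | 𝓒 ↔ 𝓐 ⫫ 𝓑 | 𝓒 ∧ 𝓐 ⫫ 𝓓 | 𝓒 ⊔ 𝓑`, and both implications are inductions with it.
If MC2 holds, then `(Y_0, …, Y_{k-1}) ⫫ (X_k, …, X_n) | (X_0, …, X_{k-1})` for all `k ≤ n`:
the chain rule moves `X_k` into the condition, and MC2 at `k` then adds `Y_k`; MC3 is a weakening.
If MC3 holds, then for fixed `i` one adds `X_{k+1}` to
`(Y_0, …, Y_i) ⫫ (X_{i+1}, …, X_k) | (X_0, …, X_i)` using MC3 at `k`, and at `k = n` the chain rule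
splits off `Y_i`, giving MC2 at `i`.
-/

open MeasureTheory ProbabilityTheory Set

lemma IsPiSystem.image2_inter {α : Type*} {S T : Set (Set α)} (hS : IsPiSystem S)
    (hT : IsPiSystem T) : IsPiSystem (image2 (· ∩ ·) S T) := by
  rintro _ ⟨s₁, hs₁, t₁, ht₁, rfl⟩ _ ⟨s₂, hs₂, t₂, ht₂, rfl⟩ hne
  rw [inter_inter_inter_comm] at hne ⊢
  exact ⟨_, hS _ hs₁ _ hs₂ hne.left, _, hT _ ht₁ _ ht₂ hne.right, rfl⟩

lemma MeasurableSpace.sup_eq_generateFrom_image2_inter {α : Type*} (m₁ m₂ : MeasurableSpace α) :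
    m₁ ⊔ m₂ = generateFrom
      (image2 (· ∩ ·) {s | MeasurableSet[m₁] s} {t | MeasurableSet[m₂] t}) := by
  refine le_antisymm (sup_le ?_ ?_) (generateFrom_le ?_)
  · exact fun s hs => measurableSet_generateFrom ⟨s, hs, univ, .univ, inter_univ s⟩
  · exact fun t ht => measurableSet_generateFrom ⟨univ, .univ, t, ht, univ_inter t⟩
  · rintro _ ⟨s, hs, t, ht, rfl⟩
    exact (le_sup_left (a := m₁) s hs).inter (le_sup_right (b := m₂) t ht)

theorem setIntegral_eq_of_isPiSystem {α E : Type*} [NormedAddCommGroup E] [NormedSpace ℝ E]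
    {m m₀ : MeasurableSpace α} {μ : Measure α} {S : Set (Set α)} {f g : α → E}
    (hm : m ≤ m₀) (h_eq : m = MeasurableSpace.generateFrom S) (hS : IsPiSystem S)
    (hf : Integrable f μ) (hg : Integrable g μ)
    (basic : ∀ t ∈ S, ∫ x in t, f x ∂μ = ∫ x in t, g x ∂μ)
    (h_univ : ∫ x, f x ∂μ = ∫ x, g x ∂μ) {t : Set α} (ht : MeasurableSet[m] t) :
    ∫ x in t, f x ∂μ = ∫ x in t, g x ∂μ := by
  induction t, ht using MeasurableSpace.induction_on_inter h_eq hS with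
  | empty => simp
  | basic t ht => exact basic t ht
  | compl t ht iht =>
    rw [setIntegral_compl (hm t ht) hf, setIntegral_compl (hm t ht) hg, iht, h_univ]
  | iUnion s hsd hsm ihs =>
    rw [integral_iUnion (fun i => hm _ (hsm i)) hsd hf.integrableOn,
      integral_iUnion (fun i => hm _ (hsm i)) hsd hg.integrableOn]
    exact tsum_congr ihs

lemma condExp_indicator_ae_eq_mul {α : Type*} {m : MeasurableSpace α} [MeasurableSpace α]
    {μ : Measure α} [IsFiniteMeasure μ] {g : α → ℝ} {t : Set α} (hg : StronglyMeasurable[m] g)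
    (hgi : Integrable g μ) (ht : MeasurableSet t) : μ[t.indicator g | m] =ᵐ[μ] g * μ⟦t | m⟧ := by
  have h : t.indicator g = g * t.indicator fun _ => (1 : ℝ) := by
    ext x; by_cases hx : x ∈ t <;> simp [hx]
  rw [h]
  exact condExp_mul_of_stronglyMeasurable_left hg (h ▸ hgi.indicator ht)
    ((integrable_const 1).indicator ht)

section CondIndep

variable {Ω : Type*} {a b c d : MeasurableSpace Ω} [mΩ : MeasurableSpace Ω]
  [StandardBorelSpace Ω] {μ : Measure Ω} [IsFiniteMeasure μ]

theorem condExp_sup_ae_eq_of_condIndep (hc : c ≤ mΩ) (ha : a ≤ mΩ) (hb : b ≤ mΩ)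
    (h : CondIndep c a b hc μ) {s : Set Ω} (hs : MeasurableSet[a] s) :
    μ⟦s | b ⊔ c⟧ =ᵐ[μ] μ⟦s | c⟧ := by
  rw [condIndep_iff c a b hc ha hb] at h
  have hbc : b ⊔ c ≤ mΩ := sup_le hb hc
  have hs_int : Integrable (s.indicator fun _ => (1 : ℝ)) μ :=
    (integrable_const 1).indicator (ha s hs)
  refine (ae_eq_condExp_of_forall_setIntegral_eq hbc hs_int
    (fun _ _ _ => integrable_condExp.integrableOn) (fun t ht _ => ?_)
    (stronglyMeasurable_condExp.mono (le_sup_right : c ≤ b ⊔ c)).aestronglyMeasurable).symm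
  refine setIntegral_eq_of_isPiSystem hbc (MeasurableSpace.sup_eq_generateFrom_image2_inter b c)
    (.image2_inter (@MeasurableSpace.isPiSystem_measurableSet _ b)
      (@MeasurableSpace.isPiSystem_measurableSet _ c))
    integrable_condExp hs_int ?_ (integral_condExp hc) ht
  rintro _ ⟨t₁, ht₁, t₂, ht₂, rfl⟩
  have ht₁' : MeasurableSet t₁ := hb t₁ ht₁
  calc ∫ x in t₁ ∩ t₂, (μ⟦s | c⟧) x ∂μ
      = ∫ x in t₂, (μ[t₁.indicator (μ⟦s | c⟧) | c]) x ∂μ := by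
        rw [setIntegral_condExp hc (integrable_condExp.indicator ht₁') ht₂,
          setIntegral_indicator ht₁', inter_comm]
    _ = ∫ x in t₂, (μ⟦s ∩ t₁ | c⟧) x ∂μ := by
        refine setIntegral_congr_ae (hc t₂ ht₂) ?_
        filter_upwards [condExp_indicator_ae_eq_mul stronglyMeasurable_condExp
          integrable_condExp ht₁', h s t₁ hs ht₁] with x h₁ h₂ _
        rw [h₁, h₂]
    _ = ∫ x in t₁ ∩ t₂, s.indicator (fun _ => (1 : ℝ)) x ∂μ := by
        rw [setIntegral_condExp hc ((integrable_const 1).indicator ((ha s hs).inter ht₁')) ht₂,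
          inter_comm s, ← indicator_indicator, setIntegral_indicator ht₁', inter_comm]

theorem condIndep_of_forall_condExp_sup_ae_eq (hc : c ≤ mΩ) (ha : a ≤ mΩ) (hb : b ≤ mΩ)
    (h : ∀ s, MeasurableSet[a] s → μ⟦s | b ⊔ c⟧ =ᵐ[μ] μ⟦s | c⟧) :
    CondIndep c a b hc μ := by
  rw [condIndep_iff c a b hc ha hb]
  intro s t hs ht
  have hbc : b ⊔ c ≤ mΩ := sup_le hb hc
  have ht' : MeasurableSet t := hb t ht
  have hs_int : Integrable (s.indicator fun _ => (1 : ℝ)) μ :=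
    (integrable_const 1).indicator (ha s hs)
  have h_ind : (s ∩ t).indicator (fun _ => (1 : ℝ)) = t.indicator (s.indicator fun _ => 1) := by
    rw [indicator_indicator, inter_comm]
  calc μ⟦s ∩ t | c⟧
      =ᵐ[μ] μ[μ[t.indicator (s.indicator fun _ => 1) | b ⊔ c] | c] := by
        rw [h_ind]; exact (condExp_condExp_of_le le_sup_right hbc).symm
    _ =ᵐ[μ] μ[t.indicator (μ⟦s | c⟧) | c] := by
        refine condExp_congr_ae ?_
        filter_upwards [condExp_indicator hs_int (le_sup_left (b := c) t ht), h s hs] with x h₁ h₂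
        rw [h₁]
        by_cases hx : x ∈ t <;> simp [hx, h₂]
    _ =ᵐ[μ] μ⟦s | c⟧ * μ⟦t | c⟧ :=
        condExp_indicator_ae_eq_mul stronglyMeasurable_condExp integrable_condExp ht'

theorem condIndep_sup_right_iff (hc : c ≤ mΩ) (ha : a ≤ mΩ) (hb : b ≤ mΩ) (hd : d ≤ mΩ) :
    CondIndep c a (b ⊔ d) hc μ ↔
      CondIndep c a b hc μ ∧ CondIndep (c ⊔ b) a d (sup_le hc hb) μ := by
  have e₁ : d ⊔ (c ⊔ b) = (b ⊔ d) ⊔ c := by ac_rfl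
  have e₂ : c ⊔ b = b ⊔ c := sup_comm c b
  constructor
  · intro h
    have h₁ := condIndep_of_condIndep_of_le_right h le_sup_left
    refine ⟨h₁, condIndep_of_forall_condExp_sup_ae_eq _ ha hd fun s hs => ?_⟩
    rw [e₁, e₂]
    exact (condExp_sup_ae_eq_of_condIndep hc ha (sup_le hb hd) h hs).trans
      (condExp_sup_ae_eq_of_condIndep hc ha hb h₁ hs).symm
  · rintro ⟨h₁, h₂⟩
    refine condIndep_of_forall_condExp_sup_ae_eq hc ha (sup_le hb hd) fun s hs => ?_
    have := condExp_sup_ae_eq_of_condIndep (sup_le hc hb) ha hd h₂ hs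
    rw [e₁, e₂] at this
    exact this.trans (condExp_sup_ae_eq_of_condIndep hc ha hb h₁ hs)

end CondIndep

lemma MeasurableSpace.comap_pi_comp {α ι κ : Type*} {β : κ → Type*} [m : ∀ k, MeasurableSpace (β k)]
    (X : ∀ k, α → β k) (f : ι → κ) :
    MeasurableSpace.comap (fun a (j : ι) => X (f j) a) MeasurableSpace.pi
      = ⨆ k ∈ range f, (m k).comap (X k) := by
  simp_rw [MeasurableSpace.pi, comap_iSup, comap_comp, iSup_range]
  rfl

lemma range_add_fin_val (i n : ℕ) :
    range (fun j : Fin (n - i) => i + 1 + (j : ℕ)) = Ico (i + 1) (n + 1) := by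
  ext x
  simp only [mem_range, mem_Ico, Fin.exists_iff]
  constructor
  · rintro ⟨j, hj, rfl⟩; omega
  · intro hx; exact ⟨x - (i + 1), by omega, by omega⟩

lemma comap_fin_tuple {α : Type*} {β : ℕ → Type*} [m : ∀ k, MeasurableSpace (β k)]
    (X : ∀ k, α → β k) (k : ℕ) :
    MeasurableSpace.comap (fun a (j : Fin k) => X j a) MeasurableSpace.pi
      = ⨆ j ∈ Iio k, (m j).comap (X j) := by
  rw [MeasurableSpace.comap_pi_comp X Fin.val, Fin.range_val]

lemma comap_fin_tuple_shift {α : Type*} {β : ℕ → Type*} [m : ∀ k, MeasurableSpace (β k)]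
    (X : ∀ k, α → β k) (i n : ℕ) :
    MeasurableSpace.comap (fun a (j : Fin (n - i)) => X (i + 1 + j) a) MeasurableSpace.pi
      = ⨆ j ∈ Ico (i + 1) (n + 1), (m j).comap (X j) := by
  rw [MeasurableSpace.comap_pi_comp X (fun j : Fin (n - i) => i + 1 + (j : ℕ)),
    range_add_fin_val]

section Intervals

variable {α : Type*} [CompleteLattice α]

lemma biSup_Iio_succ (f : ℕ → α) (k : ℕ) :
    ⨆ j ∈ Iio (k + 1), f j = (⨆ j ∈ Iio k, f j) ⊔ f k := by
  rw [Iio_add_one_eq_Iic, ← Iio_insert, iSup_insert, sup_comm]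

lemma biSup_Ico_eq_sup_succ_bot (f : ℕ → α) {k l : ℕ} (h : k < l) :
    ⨆ j ∈ Ico k l, f j = f k ⊔ ⨆ j ∈ Ico (k + 1) l, f j := by
  rw [Ico_add_one_left_eq_Ioo, ← iSup_insert, Ioo_insert_left h]

lemma biSup_Ico_succ_top (f : ℕ → α) {k l : ℕ} (h : k ≤ l) :
    ⨆ j ∈ Ico k (l + 1), f j = (⨆ j ∈ Ico k l, f j) ⊔ f l := by
  rw [Ico_add_one_right_eq_Icc, ← Ico_insert_right h, iSup_insert, sup_comm]

lemma biSup_Iio_sup_biSup_Ico (f : ℕ → α) {k l : ℕ} (h : k ≤ l) :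
    (⨆ j ∈ Iio k, f j) ⊔ ⨆ j ∈ Ico k l, f j = ⨆ j ∈ Iio l, f j := by
  rw [← iSup_union, Iio_union_Ico_eq_Iio h]

end Intervals

section Nonanticipativity

variable {Ω : Type*} {mx my : ℕ → MeasurableSpace Ω} [mΩ : MeasurableSpace Ω]
  [StandardBorelSpace Ω]

variable (mx my) in
def MC2 (hx : ∀ i, mx i ≤ mΩ) (hy : ∀ i, my i ≤ mΩ) (μ : Measure Ω) [IsFiniteMeasure μ]
    (n : ℕ) : Prop :=
  ∀ i < n, CondIndep ((⨆ j ∈ Iio (i + 1), mx j) ⊔ ⨆ j ∈ Iio i, my j) (my i)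
    (⨆ j ∈ Ico (i + 1) (n + 1), mx j)
    (sup_le (iSup₂_le fun j _ => hx j) (iSup₂_le fun j _ => hy j)) μ

variable (mx my) in
def MC3 (hx : ∀ i, mx i ≤ mΩ) (μ : Measure Ω) [IsFiniteMeasure μ] (n : ℕ) : Prop :=
  ∀ i < n, CondIndep (⨆ j ∈ Iio (i + 1), mx j) (⨆ j ∈ Iio (i + 1), my j) (mx (i + 1))
    (iSup₂_le fun j _ => hx j) μ

variable {μ : Measure Ω} [IsFiniteMeasure μ] (hx : ∀ i, mx i ≤ mΩ) (hy : ∀ i, my i ≤ mΩ) {n : ℕ}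
include hx hy

theorem condIndep_future_of_mc2 (mc2 : MC2 mx my hx hy μ n) :
    ∀ k ≤ n, CondIndep (⨆ j ∈ Iio k, mx j) (⨆ j ∈ Iio k, my j) (⨆ j ∈ Ico k (n + 1), mx j)
      (iSup₂_le fun j _ => hx j) μ := by
  have hX (s : Set ℕ) : ⨆ j ∈ s, mx j ≤ mΩ := iSup₂_le fun j _ => hx j
  have hY (s : Set ℕ) : ⨆ j ∈ s, my j ≤ mΩ := iSup₂_le fun j _ => hy j
  intro k
  induction k with
  | zero => exact fun _ => (by simp : ⨆ j ∈ Iio 0, my j = ⊥) ▸ condIndep_bot_left _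
  | succ k ih =>
    intro hk
    have h := ih (by omega)
    rw [biSup_Ico_eq_sup_succ_bot mx (by omega)] at h
    have h_past : CondIndep (⨆ j ∈ Iio (k + 1), mx j) (⨆ j ∈ Iio k, my j)
        (⨆ j ∈ Ico (k + 1) (n + 1), mx j) (hX _) μ := by
      simpa only [biSup_Iio_succ mx k] using
        ((condIndep_sup_right_iff _ (hY _) (hx k) (hX _)).mp h).2
    rw [biSup_Iio_succ my]
    exact ((condIndep_sup_right_iff _ (hX _) (hY _) (hy k)).mpr
      ⟨h_past.symm, (mc2 k (by omega)).symm⟩).symm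

theorem mc3_of_mc2 (mc2 : MC2 mx my hx hy μ n) : MC3 mx my hx μ n := fun i hi =>
  condIndep_of_condIndep_of_le_right (condIndep_future_of_mc2 hx hy mc2 (i + 1) hi)
    (le_biSup mx ⟨le_rfl, by omega⟩)

theorem condIndep_future_of_mc3 (mc3 : MC3 mx my hx μ n) {i : ℕ} :
    ∀ k, i ≤ k → k ≤ n → CondIndep (⨆ j ∈ Iio (i + 1), mx j) (⨆ j ∈ Iio (i + 1), my j)
      (⨆ j ∈ Ico (i + 1) (k + 1), mx j) (iSup₂_le fun j _ => hx j) μ := by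
  have hX (s : Set ℕ) : ⨆ j ∈ s, mx j ≤ mΩ := iSup₂_le fun j _ => hx j
  have hY (s : Set ℕ) : ⨆ j ∈ s, my j ≤ mΩ := iSup₂_le fun j _ => hy j
  intro k hik
  induction k, hik using Nat.le_induction with
  | base => exact fun _ => (by simp : ⨆ j ∈ Ico (i + 1) (i + 1), mx j = ⊥) ▸ condIndep_bot_right _
  | succ k hik ih =>
    intro hk
    have h_next : CondIndep ((⨆ j ∈ Iio (i + 1), mx j) ⊔ ⨆ j ∈ Ico (i + 1) (k + 1), mx j)
        (⨆ j ∈ Iio (i + 1), my j) (mx (k + 1)) (sup_le (hX _) (hX _)) μ := by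
      simpa only [biSup_Iio_sup_biSup_Ico mx (by omega : i + 1 ≤ k + 1)] using
        condIndep_of_condIndep_of_le_left (mc3 k (by omega))
          (biSup_mono (Iio_subset_Iio (by omega)))
    rw [biSup_Ico_succ_top mx (by omega : i + 1 ≤ k + 1)]
    exact (condIndep_sup_right_iff _ (hY _) (hX _) (hx _)).mpr ⟨ih (by omega), h_next⟩

theorem mc2_of_mc3 (mc3 : MC3 mx my hx μ n) : MC2 mx my hx hy μ n := by
  intro i hi
  have h := condIndep_future_of_mc3 hx hy mc3 n hi.le le_rfl
  rw [biSup_Iio_succ my] at h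
  exact ((condIndep_sup_right_iff _ (iSup₂_le fun j _ => hx j) (iSup₂_le fun j _ => hy j)
    (hy i)).mp h.symm).2.symm

end Nonanticipativity

theorem mc2_iff_mc3_general
    {Ω : Type*} [MeasurableSpace Ω] [StandardBorelSpace Ω]
    (P : Measure Ω) [IsProbabilityMeasure P]
    (n : ℕ)
    (𝒳 𝒴 : ℕ → Type*)
    [∀ i, MeasurableSpace (𝒳 i)]
    [∀ i, MeasurableSpace (𝒴 i)]
    (X : ∀ i, Ω → 𝒳 i) (Y : ∀ i, Ω → 𝒴 i)
    (hX : ∀ i, Measurable (X i)) (hY : ∀ i, Measurable (Y i)) :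
    -- MC2 : for every `i < n`, `Y_i ⫫ (X_{i+1}, …, X_n) | (X^i, Y^{i-1})`
    (∀ i < n,
      CondIndepFun
        (MeasurableSpace.comap
          (fun ω => ((fun j : Fin (i + 1) => X j ω), (fun j : Fin i => Y j ω)))
          inferInstance)
        ((Measurable.prodMk
            (measurable_pi_lambda _ fun j : Fin (i + 1) => hX j)
            (measurable_pi_lambda _ fun j : Fin i => hY j)).comap_le)
        (Y i) (fun ω => fun j : Fin (n - i) => X (i + 1 + j) ω) P)
    ↔
    -- MC3 : for every `i < n`, `(Y_0, …, Y_i) ⫫ X_{i+1} | (X_0, …, X_i)`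
    (∀ i < n,
      CondIndepFun
        (MeasurableSpace.comap (fun ω => fun j : Fin (i + 1) => X j ω) inferInstance)
        ((measurable_pi_lambda _ fun j : Fin (i + 1) => hX j).comap_le)
        (fun ω => fun j : Fin (i + 1) => Y j ω) (X (i + 1)) P) := by
  have hx i := (hX i).comap_le
  have hy i := (hY i).comap_le
  simp only [condIndepFun_iff_condIndep, Prod.instMeasurableSpace, MeasurableSpace.comap_prodMk,
    comap_fin_tuple, comap_fin_tuple_shift]
  exact ⟨mc3_of_mc2 hx hy, mc2_of_mc3 hx hy⟩

/-- **Equivalence of nonanticipativity conditions MC2 and MC3** (Lemma 2, part of):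
for processes `X_0, …, X_n` and `Y_0, …, Y_n` on a probability space, the family of conditions
"for every `i < n`, `Y_i` is conditionally independent of `(X_{i+1}, …, X_n)` given
`(X_0, …, X_i, Y_0, …, Y_{i-1})`" holds iff the family
"for every `i < n`, `(Y_0, …, Y_i)` is conditionally independent of `X_{i+1}` given
`(X_0, …, X_i)`" holds. -/
theorem mc2_iff_mc3
    {Ω : Type*} [MeasurableSpace Ω] [StandardBorelSpace Ω] [Nonempty Ω]
    (P : Measure Ω) [IsProbabilityMeasure P]
    (n : ℕ)
    (𝒳 𝒴 : ℕ → Type*)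
    [∀ i, MeasurableSpace (𝒳 i)] [∀ i, StandardBorelSpace (𝒳 i)]
    [∀ i, MeasurableSpace (𝒴 i)] [∀ i, StandardBorelSpace (𝒴 i)]
    (X : ∀ i, Ω → 𝒳 i) (Y : ∀ i, Ω → 𝒴 i)
    (hX : ∀ i, Measurable (X i)) (hY : ∀ i, Measurable (Y i)) :
    -- MC2 : for every `i < n`, `Y_i ⫫ (X_{i+1}, …, X_n) | (X^i, Y^{i-1})`
    (∀ i < n,
      CondIndepFun
        (MeasurableSpace.comap
          (fun ω => ((fun j : Fin (i + 1) => X j ω), (fun j : Fin i => Y j ω)))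
          inferInstance)
        ((Measurable.prodMk
            (measurable_pi_lambda _ fun j : Fin (i + 1) => hX j)
            (measurable_pi_lambda _ fun j : Fin i => hY j)).comap_le)
        (Y i) (fun ω => fun j : Fin (n - i) => X (i + 1 + j) ω) P)
    ↔
    -- MC3 : for every `i < n`, `(Y_0, …, Y_i) ⫫ X_{i+1} | (X_0, …, X_i)`
    (∀ i < n,
      CondIndepFun
        (MeasurableSpace.comap (fun ω => fun j : Fin (i + 1) => X j ω) inferInstance)
        ((measurable_pi_lambda _ fun j : Fin (i + 1) => hX j).comap_le)
        (fun ω => fun j : Fin (i + 1) => Y j ω) (X (i + 1)) P) :=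
  mc2_iff_mc3_general P n 𝒳 𝒴 X Y hX hY
end

section
/- Convexity of the set of nonanticipative joint distributions (Theorem 1, in conditional-independence form): let μ₁ and μ₂ be probability measures on (∏_{i=0}^n 𝒳_i) × (∏_{i=0}^n 𝒴_i) whose marginals on ∏_{i=0}^n 𝒳_i coincide. Suppose that under each μ_k (k = 1,2), for every i = 0,1,…,n−1, the coordinate tuple (X_{i+1},…,X_n) is conditionally independent of (Y_0,…,Y_i) given (X_0,…,X_i). Then for every λ ∈ [0,1] the mixture λμ₁ + (1−λ)μ₂ also satisfies: for every i = 0,1,…,n−1, (X_{i+1},…,X_n) is conditionally independent of (Y_0,…,Y_i) given (X_0,…,X_i). -/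
open MeasureTheory ProbabilityTheory
open scoped NNReal ENNReal

/-!
Write `p` for the projection onto the `X`-coordinates and `m = σ(X_0, …, X_i) ⊆ σ(p)`.
For an event `A = {(X_{i+1}, …, X_n) ∈ S}`, the conditional probability `P(A | m)` is computed
from the law of `p` alone, so `μ₁`, `μ₂` and every mixture share one version `a` of it. Given that, conditional independence of `A` from an event `B` under `ρ` says
`P_ρ(A ∩ B ∩ C) = ∫_C a 𝟙_B dρ` for all `C ∈ m`, a condition that is linear in `ρ`.
-/

namespace MeasureTheory

variable {Ω : Type*} {m mΩ : MeasurableSpace Ω} {μ : Measure Ω}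

theorem condExp_ae_eq_condExp_iff_setIntegral_eq {E : Type*} [NormedAddCommGroup E]
    [NormedSpace ℝ E] [CompleteSpace E] (hm : m ≤ mΩ) [SigmaFinite (μ.trim hm)] {f g : Ω → E}
    (hf : Integrable f μ) (hg : Integrable g μ) :
    μ[f | m] =ᵐ[μ] μ[g | m] ↔
      ∀ s, MeasurableSet[m] s → ∫ x in s, f x ∂μ = ∫ x in s, g x ∂μ := by
  refine ⟨fun h s hs => ?_, fun h => ?_⟩
  · rw [← setIntegral_condExp hm hf hs, ← setIntegral_condExp hm hg hs]
    exact integral_congr_ae (ae_restrict_of_ae h)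
  · refine ae_eq_condExp_of_forall_setIntegral_eq hm hg
      (fun s _ _ => integrable_condExp.integrableOn) (fun s hs _ => ?_)
      stronglyMeasurable_condExp.aestronglyMeasurable
    rw [setIntegral_condExp hm hf hs, h s hs]

theorem condExp_ae_eq_mul_condExp_iff (hm : m ≤ mΩ) [IsFiniteMeasure μ] {a f g : Ω → ℝ}
    (ha : StronglyMeasurable[m] a) {c : ℝ} (ha_bound : ∀ᵐ x ∂μ, ‖a x‖ ≤ c)
    (hf : Integrable f μ) (hg : Integrable g μ) :
    μ[g | m] =ᵐ[μ] a * μ[f | m] ↔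
      ∀ s, MeasurableSet[m] s → ∫ x in s, g x ∂μ = ∫ x in s, a x * f x ∂μ := by
  have hpull : μ[a * f | m] =ᵐ[μ] a * μ[f | m] :=
    condExp_stronglyMeasurable_mul_of_bound hm ha hf c ha_bound
  rw [← condExp_ae_eq_condExp_iff_setIntegral_eq hm hg
    (hf.bdd_mul (ha.mono hm).aestronglyMeasurable ha_bound)]
  exact ⟨fun h => h.trans hpull.symm, fun h => h.trans hpull⟩

theorem condExp_comp_ae_eq_comp_condExp_map {E : Type*} {m' mE : MeasurableSpace E}
    {p : Ω → E} (hp : Measurable p) (hm : m' ≤ mE) [IsFiniteMeasure μ]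
    {f : E → ℝ} (hf : Integrable f (μ.map p)) :
    μ[f ∘ p | m'.comap p] =ᵐ[μ] (μ.map p)[f | m'] ∘ p := by
  have hcondExp : AEStronglyMeasurable ((μ.map p)[f | m']) (μ.map p) :=
    (stronglyMeasurable_condExp.mono hm).aestronglyMeasurable
  refine (ae_eq_condExp_of_forall_setIntegral_eq ((MeasurableSpace.comap_mono hm).trans
    hp.comap_le) (hf.comp_measurable hp) (fun _ _ _ => ?_) ?_ ?_).symm
  · exact (integrable_condExp.comp_measurable hp).integrableOn
  · rintro _ ⟨s, hs, rfl⟩ _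
    calc ∫ x in p ⁻¹' s, (μ.map p)[f | m'] (p x) ∂μ
        = ∫ y in s, (μ.map p)[f | m'] y ∂(μ.map p) :=
          (setIntegral_map (hm _ hs) hcondExp hp.aemeasurable).symm
      _ = ∫ y in s, f y ∂(μ.map p) := setIntegral_condExp hm hf hs
      _ = ∫ x in p ⁻¹' s, f (p x) ∂μ :=
          setIntegral_map (hm _ hs) hf.aestronglyMeasurable hp.aemeasurable
  · exact (stronglyMeasurable_condExp.comp_measurable
      (Measurable.of_comap_le le_rfl)).aestronglyMeasurable

theorem setIntegral_smul_add_smul_measure {E : Type*} [NormedAddCommGroup E] [NormedSpace ℝ E]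
    {μ₁ μ₂ : Measure Ω} {f : Ω → E} (hf₁ : Integrable f μ₁) (hf₂ : Integrable f μ₂)
    (c₁ c₂ : ℝ≥0) (s : Set Ω) :
    ∫ x in s, f x ∂(c₁ • μ₁ + c₂ • μ₂) = c₁ • ∫ x in s, f x ∂μ₁ + c₂ • ∫ x in s, f x ∂μ₂ := by
  rw [Measure.restrict_add, Measure.restrict_smul, Measure.restrict_smul,
    integral_add_measure hf₁.restrict.smul_measure_nnreal hf₂.restrict.smul_measure_nnreal,
    integral_smul_nnreal_measure, integral_smul_nnreal_measure]

theorem map_smul_add_one_sub_smul_of_map_eq {E : Type*} [MeasurableSpace E] {p : Ω → E}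
    (hp : Measurable p) {μ₁ μ₂ : Measure Ω} (hmarg : μ₁.map p = μ₂.map p) {lam : ℝ≥0}
    (hlam : lam ≤ 1) :
    (lam • μ₁ + (1 - lam) • μ₂).map p = μ₁.map p := by
  rw [Measure.map_add _ _ hp, Measure.map_smul, Measure.map_smul, ← hmarg, ← add_smul,
    add_tsub_cancel_of_le hlam, one_smul]

theorem ae_norm_le_one_of_condExp_indicator_ae_eq [IsFiniteMeasure μ] {A : Set Ω} {a : Ω → ℝ}
    (ha : μ⟦A | m⟧ =ᵐ[μ] a) : ∀ᵐ x ∂μ, ‖a x‖ ≤ 1 := by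
  have hbound := ae_bdd_abs_condExp_of_ae_bdd_abs (m := m) (R := 1) (μ := μ)
    (f := A.indicator fun _ => (1 : ℝ)) (Filter.Eventually.of_forall fun x => by
      by_cases hx : x ∈ A <;> simp [hx])
  filter_upwards [ha, hbound] with x hx hx_le
  rwa [← hx]

theorem condExp_inter_ae_eq_mul_iff_setIntegral_eq (hm : m ≤ mΩ) [IsFiniteMeasure μ]
    {A B : Set Ω} (hA : MeasurableSet A) (hB : MeasurableSet B) {a : Ω → ℝ}
    (ha : StronglyMeasurable[m] a) (haA : μ⟦A | m⟧ =ᵐ[μ] a) :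
    (μ⟦A ∩ B | m⟧ =ᵐ[μ] fun x => (μ⟦A | m⟧) x * (μ⟦B | m⟧) x) ↔
      ∀ s, MeasurableSet[m] s → ∫ x in s, (A ∩ B).indicator (fun _ => (1 : ℝ)) x ∂μ =
        ∫ x in s, a x * B.indicator (fun _ => (1 : ℝ)) x ∂μ := by
  have hprod : (fun x => (μ⟦A | m⟧) x * (μ⟦B | m⟧) x) =ᵐ[μ] a * μ⟦B | m⟧ :=
    haA.mul Filter.EventuallyEq.rfl
  rw [← condExp_ae_eq_mul_condExp_iff hm ha (ae_norm_le_one_of_condExp_indicator_ae_eq haA)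
    ((integrable_const 1).indicator hB) ((integrable_const 1).indicator (hA.inter hB))]
  exact ⟨fun h => h.trans hprod, fun h => h.trans hprod.symm⟩

end MeasureTheory

namespace ProbabilityTheory

variable {Ω E F β γ : Type*} [mΩ : MeasurableSpace Ω] [StandardBorelSpace Ω]
  [MeasurableSpace E] [mF : MeasurableSpace F] [MeasurableSpace β] [MeasurableSpace γ]

theorem CondIndepFun.smul_add_one_sub_smul_of_map_eq {p : Ω → E} {q : E → F} {r : E → β}
    {g : Ω → γ} (hp : Measurable p) (hq : Measurable q) (hr : Measurable r) (hg : Measurable g)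
    {hm : MeasurableSpace.comap (q ∘ p) mF ≤ mΩ} {μ₁ μ₂ : Measure Ω} [IsFiniteMeasure μ₁]
    [IsFiniteMeasure μ₂] (hmarg : μ₁.map p = μ₂.map p)
    (h₁ : CondIndepFun (MeasurableSpace.comap (q ∘ p) mF) hm (r ∘ p) g μ₁)
    (h₂ : CondIndepFun (MeasurableSpace.comap (q ∘ p) mF) hm (r ∘ p) g μ₂)
    {lam : ℝ≥0} (hlam : lam ≤ 1) :
    CondIndepFun (MeasurableSpace.comap (q ∘ p) mF) hm (r ∘ p) g
      (lam • μ₁ + (1 - lam) • μ₂) := by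
  rw [condIndepFun_iff_condExp_inter_preimage_eq_mul (hr.comp hp) hg] at h₁ h₂ ⊢
  rw [← MeasurableSpace.comap_comp] at h₁ h₂ ⊢
  intro s t hs ht
  have hle : (MeasurableSpace.comap q mF).comap p ≤ mΩ := MeasurableSpace.comap_comp.trans_le hm
  set ν := μ₁.map p
  set a : Ω → ℝ := ν⟦r ⁻¹' s | MeasurableSpace.comap q mF⟧ ∘ p
  have ha : StronglyMeasurable[(MeasurableSpace.comap q mF).comap p] a :=
    stronglyMeasurable_condExp.comp_measurable (Measurable.of_comap_le le_rfl)
  have hversion : ∀ (ρ : Measure Ω) [IsFiniteMeasure ρ], ρ.map p = ν →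
      ρ⟦(r ∘ p) ⁻¹' s | (MeasurableSpace.comap q mF).comap p⟧ =ᵐ[ρ] a := by
    intro ρ _ hρ
    have h := condExp_comp_ae_eq_comp_condExp_map (μ := ρ) hp hq.comap_le
      (f := (r ⁻¹' s).indicator fun _ => (1 : ℝ)) ((integrable_const 1).indicator (hr hs))
    rwa [hρ] at h
  have hint : ∀ (ρ : Measure Ω) [IsFiniteMeasure ρ], ρ.map p = ν →
      Integrable (fun x => a x * (g ⁻¹' t).indicator (fun _ => (1 : ℝ)) x) ρ :=
    fun ρ _ hρ => ((integrable_const 1).indicator (hg ht)).bdd_mul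
      (ha.mono hle).aestronglyMeasurable
      (ae_norm_le_one_of_condExp_indicator_ae_eq (hversion ρ hρ))
  have hchar := fun (ρ : Measure Ω) [IsFiniteMeasure ρ] (hρ : ρ.map p = ν) =>
    condExp_inter_ae_eq_mul_iff_setIntegral_eq hle ((hr.comp hp) hs) (hg ht) ha (hversion ρ hρ)
  rw [hchar (lam • μ₁ + (1 - lam) • μ₂) (map_smul_add_one_sub_smul_of_map_eq hp hmarg hlam)]
  intro C hC
  have hind : ∀ (ρ : Measure Ω) [IsFiniteMeasure ρ],
      Integrable (((r ∘ p) ⁻¹' s ∩ g ⁻¹' t).indicator fun _ => (1 : ℝ)) ρ :=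
    fun _ _ => (integrable_const 1).indicator ((hr.comp hp hs).inter (hg ht))
  rw [setIntegral_smul_add_smul_measure (hind μ₁) (hind μ₂),
    setIntegral_smul_add_smul_measure (hint μ₁ rfl) (hint μ₂ hmarg.symm),
    (hchar μ₁ rfl).1 (h₁ s t hs ht) C hC, (hchar μ₂ hmarg.symm).1 (h₂ s t hs ht) C hC]

end ProbabilityTheory

/-- **Convexity of the set of nonanticipative joint distributions** (Theorem 1, in
conditional-independence form): if two probability measures `μ₁, μ₂` on
`(∏_{i=0}^n 𝒳_i) × (∏_{i=0}^n 𝒴_i)` have the same marginal on `∏ 𝒳_i` and both satisfy the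
nonanticipativity constraint "for every `i < n`, `(X_{i+1}, …, X_n)` is conditionally
independent of `(Y_0, …, Y_i)` given `(X_0, …, X_i)`" (for the coordinate processes), then
every mixture `λ•μ₁ + (1-λ)•μ₂`, `λ ∈ [0,1]`, also satisfies the constraint. -/
theorem convexity_of_nonanticipative_distributions
    {n : ℕ} (𝒳 𝒴 : Fin (n + 1) → Type*)
    [∀ j, MeasurableSpace (𝒳 j)] [∀ j, StandardBorelSpace (𝒳 j)]
    [∀ j, MeasurableSpace (𝒴 j)] [∀ j, StandardBorelSpace (𝒴 j)]
    (μ₁ μ₂ : Measure (((j : Fin (n + 1)) → 𝒳 j) × ((j : Fin (n + 1)) → 𝒴 j)))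
    [IsProbabilityMeasure μ₁] [IsProbabilityMeasure μ₂]
    (hmarg : μ₁.map Prod.fst = μ₂.map Prod.fst)
    (h₁ : ∀ i : ℕ, ∀ hi : i < n,
      CondIndepFun
        (MeasurableSpace.comap
          (fun ω : ((j : Fin (n + 1)) → 𝒳 j) × ((j : Fin (n + 1)) → 𝒴 j) =>
            fun j : Fin (i + 1) => ω.1 (Fin.castLE (by omega) j)) inferInstance)
        ((measurable_pi_lambda _ fun j : Fin (i + 1) =>
            (measurable_pi_apply _).comp measurable_fst).comap_le)
        (fun ω => fun j : Fin (n - i) => ω.1 ⟨i + 1 + j.1, by have := j.isLt; omega⟩)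
        (fun ω => fun j : Fin (i + 1) => ω.2 (Fin.castLE (by omega) j)) μ₁)
    (h₂ : ∀ i : ℕ, ∀ hi : i < n,
      CondIndepFun
        (MeasurableSpace.comap
          (fun ω : ((j : Fin (n + 1)) → 𝒳 j) × ((j : Fin (n + 1)) → 𝒴 j) =>
            fun j : Fin (i + 1) => ω.1 (Fin.castLE (by omega) j)) inferInstance)
        ((measurable_pi_lambda _ fun j : Fin (i + 1) =>
            (measurable_pi_apply _).comp measurable_fst).comap_le)
        (fun ω => fun j : Fin (n - i) => ω.1 ⟨i + 1 + j.1, by have := j.isLt; omega⟩)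
        (fun ω => fun j : Fin (i + 1) => ω.2 (Fin.castLE (by omega) j)) μ₂)
    (lam : ℝ≥0) (hlam : lam ≤ 1) :
    ∀ i : ℕ, ∀ hi : i < n,
      CondIndepFun
        (MeasurableSpace.comap
          (fun ω : ((j : Fin (n + 1)) → 𝒳 j) × ((j : Fin (n + 1)) → 𝒴 j) =>
            fun j : Fin (i + 1) => ω.1 (Fin.castLE (by omega) j)) inferInstance)
        ((measurable_pi_lambda _ fun j : Fin (i + 1) =>
            (measurable_pi_apply _).comp measurable_fst).comap_le)
        (fun ω => fun j : Fin (n - i) => ω.1 ⟨i + 1 + j.1, by have := j.isLt; omega⟩)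
        (fun ω => fun j : Fin (i + 1) => ω.2 (Fin.castLE (by omega) j))
        (lam • μ₁ + (1 - lam) • μ₂) := by
  intro i hi
  refine CondIndepFun.smul_add_one_sub_smul_of_map_eq
    (q := fun x (j : Fin (i + 1)) => x (Fin.castLE (by omega) j))
    (r := fun x (j : Fin (n - i)) => x ⟨i + 1 + j.1, by omega⟩)
    measurable_fst ?_ ?_ ?_ hmarg (h₁ i hi) (h₂ i hi) hlam <;> fun_prop
end

section
/- Stationary distribution of the joint BSMS(p)–reproduction chain: fix p ∈ (0,1) and D ∈ (0,1/2), and let Π be the transition matrix on {0,1}² given by Π((x',y') | (x,y)) = T_p(x' | x) · Q*(y' | y, x'), with T_p and Q* as defined in the context. Then the probability vector π̄ on {0,1}² defined by π̄(x,y) = (1−D)/2 if x = y and π̄(x,y) = D/2 if x ≠ y is invariant for Π, i.e., for every (x',y') ∈ {0,1}², Σ_{(x,y) ∈ {0,1}²} Π((x',y') | (x,y)) · π̄(x,y) = π̄(x',y'). Consequently, for the Markov chain ((X_i,Y_i)) with transition matrix Π and initial distribution π̄, one has ℙ(X_i ≠ Y_i) = D for every i, so the average per-letter Hamming distortion equals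 D. -/
open MeasureTheory
open scoped ENNReal

/-!
Summing the Markov property over all paths up to time `i` shows that the law of `Z (i + 1)` is
`Π` applied to the law of `Z i`; so once `π̄` is known to be invariant, every `Z i` has law `π̄`,
and `ℙ(X_i ≠ Y_i) = π̄(0,1) + π̄(1,0) = D`.
-/

/-- The BSMS(`p`) transition kernel on `{0,1}`: `T_p(x' | x) = 1 - p` if `x' = x`, `p`
otherwise. -/
noncomputable def bsmsKernel (p : ℝ) (x' x : Bool) : ℝ := if x' = x then 1 - p else p

/-- `α = (1-p)(1-D)/m` with `m = 1 - p - D + 2pD`. -/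
noncomputable def bsmsAlpha (p D : ℝ) : ℝ := (1 - p) * (1 - D) / (1 - p - D + 2 * p * D)

/-- `β = p(1-D)/(1-m)` with `1 - m = p + D - 2pD`. -/
noncomputable def bsmsBeta (p D : ℝ) : ℝ := p * (1 - D) / (p + D - 2 * p * D)

/-- The optimal reproduction kernel `Q*(y | y', x)` of the nonanticipative RDF of the
BSMS(`p`) with Hamming distortion. -/
noncomputable def bsmsQstar (p D : ℝ) (y' x y : Bool) : ℝ :=
  if y = x then (if y = y' then bsmsAlpha p D else bsmsBeta p D)
  else (if y = y' then 1 - bsmsBeta p D else 1 - bsmsAlpha p D)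

/-- The transition matrix `Π((x',y') | (x,y)) = T_p(x' | x) · Q*(y' | y, x')` of the joint
source–reproduction pair process. -/
noncomputable def bsmsJointKernel (p D : ℝ) (z' z : Bool × Bool) : ℝ :=
  bsmsKernel p z'.1 z.1 * bsmsQstar p D z.2 z'.1 z'.2

/-- The probability vector `π̄` on `{0,1}²`: `π̄(x,y) = (1-D)/2` if `x = y` and `D/2`
otherwise. -/
noncomputable def bsmsPiBar (D : ℝ) (z : Bool × Bool) : ℝ :=
  if z.1 = z.2 then (1 - D) / 2 else D / 2

open Finset

section MarkovChain

variable {Ω S : Type*}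

/-- `K z w` is the probability of a step from `w` to `z`; the Markov property is asked along every
path of positive probability. -/
def IsMarkovChainUpTo [MeasurableSpace Ω] (P : Measure Ω) (Z : ℕ → Ω → S) (K : S → S → ℝ≥0∞)
    (n : ℕ) : Prop :=
  ∀ i : ℕ, ∀ h1 : 1 ≤ i, i ≤ n → ∀ z : S, ∀ zs : Fin i → S,
    P {ω | ∀ j : Fin i, Z j ω = zs j} ≠ 0 →
    P ({ω | ∀ j : Fin i, Z j ω = zs j} ∩ {ω | Z i ω = z})
      = K z (zs ⟨i - 1, Nat.sub_lt h1 Nat.one_pos⟩) * P {ω | ∀ j : Fin i, Z j ω = zs j}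

lemma setOf_forall_eq_eq_preimage (Z : ℕ → Ω → S) {i : ℕ} (zs : Fin i → S) :
    {ω | ∀ j : Fin i, Z j ω = zs j} = (fun ω (j : Fin i) => Z j ω) ⁻¹' {zs} := by
  ext ω
  simp [funext_iff]

variable [MeasurableSpace Ω] [MeasurableSpace S] {Z : ℕ → Ω → S}

lemma measurable_path (hZ : ∀ i, Measurable (Z i)) (i : ℕ) :
    Measurable fun ω (j : Fin i) => Z j ω :=
  measurable_pi_lambda _ fun j => hZ j

variable [Fintype S] [MeasurableSingletonClass S] {P : Measure Ω}

lemma measure_eq_sum_inter_path (hZ : ∀ i, Measurable (Z i)) (i : ℕ) (A : Set Ω) :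
    P A = ∑ zs : Fin i → S, P ({ω | ∀ j : Fin i, Z j ω = zs j} ∩ A) := by
  have h := sum_measure_preimage_singleton (μ := P.restrict A) univ
    fun zs _ => measurable_path hZ i (measurableSet_singleton zs)
  simp only [coe_univ, Set.preimage_univ, Measure.restrict_apply_univ] at h
  rw [← h]
  refine sum_congr rfl fun zs _ => ?_
  rw [Measure.restrict_apply (measurable_path hZ i (measurableSet_singleton zs)),
    setOf_forall_eq_eq_preimage]

lemma measure_eq_sum_path_of_last [DecidableEq S] (hZ : ∀ i, Measurable (Z i)) (i : ℕ) (w : S) :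
    P {ω | Z i ω = w}
      = ∑ zs : Fin (i + 1) → S with zs (Fin.last i) = w,
          P {ω | ∀ j : Fin (i + 1), Z j ω = zs j} := by
  simp only [setOf_forall_eq_eq_preimage]
  rw [sum_measure_preimage_singleton _ fun zs _ => measurable_path hZ (i + 1)
      (measurableSet_singleton zs)]
  congr 1
  ext ω
  simp

lemma measure_succ_eq_sum_of_isMarkovChainUpTo {K : S → S → ℝ≥0∞} {n : ℕ}
    (hZ : ∀ i, Measurable (Z i)) (hM : IsMarkovChainUpTo P Z K n) {i : ℕ} (hi : i + 1 ≤ n)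
    (z : S) :
    P {ω | Z (i + 1) ω = z} = ∑ w, K z w * P {ω | Z i ω = w} := by
  classical
  have hstep : ∀ zs : Fin (i + 1) → S,
      P ({ω | ∀ j : Fin (i + 1), Z j ω = zs j} ∩ {ω | Z (i + 1) ω = z})
        = K z (zs (Fin.last i)) * P {ω | ∀ j : Fin (i + 1), Z j ω = zs j} := by
    intro zs
    by_cases h0 : P {ω | ∀ j : Fin (i + 1), Z j ω = zs j} = 0
    · rw [h0, mul_zero]
      exact measure_mono_null Set.inter_subset_left h0
    · exact hM (i + 1) (by omega) hi z zs h0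
  calc P {ω | Z (i + 1) ω = z}
      = ∑ zs : Fin (i + 1) → S,
          K z (zs (Fin.last i)) * P {ω | ∀ j : Fin (i + 1), Z j ω = zs j} := by
        rw [measure_eq_sum_inter_path hZ (i + 1)]
        exact sum_congr rfl fun zs _ => hstep zs
    _ = ∑ w, ∑ zs : Fin (i + 1) → S with zs (Fin.last i) = w,
          K z w * P {ω | ∀ j : Fin (i + 1), Z j ω = zs j} := by
        rw [← sum_fiberwise univ (fun zs : Fin (i + 1) → S => zs (Fin.last i))]
        refine sum_congr rfl fun w _ => sum_congr rfl fun zs hzs => ?_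
        rw [(mem_filter.1 hzs).2]
    _ = ∑ w, K z w * P {ω | Z i ω = w} := by
        simp only [← mul_sum, ← measure_eq_sum_path_of_last hZ]

theorem measure_eq_of_isMarkovChainUpTo {K : S → S → ℝ≥0∞} {n : ℕ} (π : S → ℝ≥0∞)
    (hZ : ∀ i, Measurable (Z i)) (hM : IsMarkovChainUpTo P Z K n)
    (hπ : ∀ z, ∑ w, K z w * π w = π z) (h0 : ∀ z, P {ω | Z 0 ω = z} = π z) :
    ∀ i ≤ n, ∀ z, P {ω | Z i ω = z} = π z := by
  intro i
  induction i with
  | zero => exact fun _ => h0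
  | succ i ih =>
    intro hi z
    simp only [measure_succ_eq_sum_of_isMarkovChainUpTo hZ hM hi, ih (by omega), hπ]

end MarkovChain

lemma sum_ofReal_mul_ofReal_eq {S : Type*} [Fintype S] {K : S → ℝ} {π : S → ℝ} {c : ℝ}
    (hK : ∀ w, 0 ≤ K w) (hπ : ∀ w, 0 ≤ π w) (h : ∑ w, K w * π w = c) :
    ∑ w, ENNReal.ofReal (K w) * ENNReal.ofReal (π w) = ENNReal.ofReal c := by
  simp only [← ENNReal.ofReal_mul (hK _)]
  rw [← ENNReal.ofReal_sum_of_nonneg fun w _ => mul_nonneg (hK w) (hπ w), h]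

section BSMS

variable {p D : ℝ}

lemma bsms_m_pos (hp : p ∈ Set.Ioo 0 1) (hD : D ∈ Set.Ioo 0 1) : 0 < 1 - p - D + 2 * p * D := by
  obtain ⟨hp0, hp1⟩ := hp
  obtain ⟨hD0, hD1⟩ := hD
  nlinarith [mul_pos (sub_pos.2 hp1) (sub_pos.2 hD1), mul_pos hp0 hD0]

lemma bsms_one_sub_m_pos (hp : p ∈ Set.Ioo 0 1) (hD : D ∈ Set.Ioo 0 1) :
    0 < p + D - 2 * p * D := by
  obtain ⟨hp0, hp1⟩ := hp
  obtain ⟨hD0, hD1⟩ := hD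
  nlinarith [mul_pos hp0 (sub_pos.2 hD1), mul_pos hD0 (sub_pos.2 hp1)]

lemma bsmsAlpha_mem_Icc (hp : p ∈ Set.Ioo 0 1) (hD : D ∈ Set.Ioo 0 1) :
    bsmsAlpha p D ∈ Set.Icc 0 1 := by
  have hm := bsms_m_pos hp hD
  obtain ⟨hp0, hp1⟩ := hp
  obtain ⟨hD0, hD1⟩ := hD
  exact ⟨div_nonneg (by nlinarith) hm.le, (div_le_one hm).2 (by nlinarith)⟩

lemma bsmsBeta_mem_Icc (hp : p ∈ Set.Ioo 0 1) (hD : D ∈ Set.Ioo 0 1) :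
    bsmsBeta p D ∈ Set.Icc 0 1 := by
  have hm := bsms_one_sub_m_pos hp hD
  obtain ⟨hp0, hp1⟩ := hp
  obtain ⟨hD0, hD1⟩ := hD
  exact ⟨div_nonneg (by nlinarith) hm.le, (div_le_one hm).2 (by nlinarith)⟩

lemma bsmsKernel_nonneg (hp : p ∈ Set.Icc 0 1) (x' x : Bool) : 0 ≤ bsmsKernel p x' x := by
  unfold bsmsKernel
  split_ifs <;> linarith [hp.1, hp.2]

lemma bsmsQstar_nonneg (hp : p ∈ Set.Ioo 0 1) (hD : D ∈ Set.Ioo 0 1) (y' x y : Bool) :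
    0 ≤ bsmsQstar p D y' x y := by
  have hα := bsmsAlpha_mem_Icc hp hD
  have hβ := bsmsBeta_mem_Icc hp hD
  unfold bsmsQstar
  split_ifs <;> linarith [hα.1, hα.2, hβ.1, hβ.2]

lemma bsmsJointKernel_nonneg (hp : p ∈ Set.Ioo 0 1) (hD : D ∈ Set.Ioo 0 1) (z' z : Bool × Bool) :
    0 ≤ bsmsJointKernel p D z' z :=
  mul_nonneg (bsmsKernel_nonneg (Set.Ioo_subset_Icc_self hp) _ _) (bsmsQstar_nonneg hp hD _ _ _)

lemma bsmsPiBar_nonneg (hD : D ∈ Set.Icc 0 1) (z : Bool × Bool) : 0 ≤ bsmsPiBar D z := by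
  unfold bsmsPiBar
  split_ifs <;> linarith [hD.1, hD.2]

lemma bsmsAlpha_mul (hm : 1 - p - D + 2 * p * D ≠ 0) :
    bsmsAlpha p D * (1 - p - D + 2 * p * D) = (1 - p) * (1 - D) :=
  div_mul_cancel₀ _ hm

lemma bsmsBeta_mul (hm' : p + D - 2 * p * D ≠ 0) :
    bsmsBeta p D * (p + D - 2 * p * D) = p * (1 - D) :=
  div_mul_cancel₀ _ hm'

/-- Weighting by `π̄`, the mass reaching `(x', y')` is `(α m + β (1 - m)) / 2` when `y' = x'` and
`((1 - α) m + (1 - β) (1 - m)) / 2` otherwise. -/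
lemma bsmsPiBar_invariant (hm : 1 - p - D + 2 * p * D ≠ 0) (hm' : p + D - 2 * p * D ≠ 0)
    (z' : Bool × Bool) :
    ∑ z : Bool × Bool, bsmsJointKernel p D z' z * bsmsPiBar D z = bsmsPiBar D z' := by
  have hα := bsmsAlpha_mul hm
  have hβ := bsmsBeta_mul hm'
  obtain ⟨x', y'⟩ := z'
  simp only [Fintype.sum_prod_type, Fintype.sum_bool, bsmsJointKernel, bsmsKernel, bsmsQstar,
    bsmsPiBar]
  cases x' <;> cases y' <;> simp only [↓reduceIte, Bool.false_eq_true, Bool.true_eq_false]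
  · linear_combination hα / 2 + hβ / 2
  · linear_combination -hα / 2 - hβ / 2
  · linear_combination -hα / 2 - hβ / 2
  · linear_combination hα / 2 + hβ / 2

lemma sum_bsmsPiBar_of_ne (D : ℝ) :
    ∑ z : Bool × Bool with z.1 ≠ z.2, bsmsPiBar D z = D := by
  simp [sum_filter, Fintype.sum_prod_type, bsmsPiBar]

end BSMS

/-- **Stationary distribution of the joint BSMS(p)–reproduction chain**: the vector `π̄` is
invariant for the transition matrix `Π((x',y')|(x,y)) = T_p(x'|x) · Q*(y'|y,x')`, and for the
Markov chain `Z_i = (X_i, Y_i)` with transition matrix `Π` and initial distribution `π̄` one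
has `ℙ(X_i ≠ Y_i) = D` for every `i`, so the average per-letter Hamming distortion equals
`D`. -/
theorem bsms_joint_chain_stationary_distribution
    {Ω : Type*} [MeasurableSpace Ω] (P : Measure Ω)
    (p D : ℝ) (hp : p ∈ Set.Ioo (0 : ℝ) 1) (hD : D ∈ Set.Ioo (0 : ℝ) (1 / 2))
    (n : ℕ) (Z : ℕ → Ω → Bool × Bool)
    (hZm : ∀ i, Measurable (Z i))
    -- initial distribution `π̄`
    (hinit : ∀ z : Bool × Bool, P {ω | Z 0 ω = z} = ENNReal.ofReal (bsmsPiBar D z))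
    -- Markov property with transition matrix `Π`
    (hmarkov : ∀ i : ℕ, ∀ h1 : 1 ≤ i, i ≤ n → ∀ z : Bool × Bool,
      ∀ zs : Fin i → Bool × Bool,
      P {ω | ∀ j : Fin i, Z j ω = zs j} ≠ 0 →
      P ({ω | ∀ j : Fin i, Z j ω = zs j} ∩ {ω | Z i ω = z})
        = ENNReal.ofReal (bsmsJointKernel p D z (zs ⟨i - 1, by omega⟩))
            * P {ω | ∀ j : Fin i, Z j ω = zs j}) :
    -- `π̄` is invariant for `Π`
    (∀ z' : Bool × Bool,
      ∑ z : Bool × Bool, bsmsJointKernel p D z' z * bsmsPiBar D z = bsmsPiBar D z')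
    ∧
    -- the per-letter Hamming distortion is `D` at every time
    (∀ i : ℕ, i ≤ n → P {ω | (Z i ω).1 ≠ (Z i ω).2} = ENNReal.ofReal D) := by
  have hD1 : D ∈ Set.Ioo 0 1 := ⟨hD.1, by linarith [hD.2]⟩
  have hinv := bsmsPiBar_invariant (bsms_m_pos hp hD1).ne' (bsms_one_sub_m_pos hp hD1).ne'
  have hπ := bsmsPiBar_nonneg (Set.Ioo_subset_Icc_self hD1)
  have hlaw : ∀ i ≤ n, ∀ z, P {ω | Z i ω = z} = ENNReal.ofReal (bsmsPiBar D z) :=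
    measure_eq_of_isMarkovChainUpTo (K := fun z w => ENNReal.ofReal (bsmsJointKernel p D z w)) _
      hZm hmarkov
      (fun z => sum_ofReal_mul_ofReal_eq (bsmsJointKernel_nonneg hp hD1 z) hπ (hinv z)) hinit
  refine ⟨hinv, fun i hi => ?_⟩
  have hdiag : {ω | (Z i ω).1 ≠ (Z i ω).2}
      = Z i ⁻¹' ↑(univ.filter fun z : Bool × Bool => z.1 ≠ z.2) := by
    ext ω
    simp
  rw [hdiag, ← sum_measure_preimage_singleton _ fun z _ => hZm i (measurableSet_singleton z)]
  simp only [Set.preimage, Set.mem_singleton_iff, hlaw i hi]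
  rw [← ENNReal.ofReal_sum_of_nonneg fun z _ => hπ z, sum_bsmsPiBar_of_ne]
end

section
/- Value of the nonanticipative RDF of the BSMS(p) (evaluated form of Theorem 9): fix p ∈ (0,1) and D ∈ (0,1/2), and let T_p, Q*, π̄, m be as defined in the context. Define the weights w(y', x, y) := Σ_{x' ∈ {0,1}} π̄(x', y') · T_p(x | x') · Q*(y | y', x) for (y', x, y) ∈ {0,1}³. Then Σ_{y' ∈ {0,1}} Σ_{x ∈ {0,1}} Σ_{y ∈ {0,1}} w(y', x, y) · ln( Q*(y | y', x) / T_p(y | y') ) = H(m) − H(D), where H(q) = −q·ln q − (1−q)·ln(1−q) is the binary entropy function with natural logarithm. -/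
open MeasureTheory

/-- The binary entropy function with natural logarithm:
`H(q) = −q·ln q − (1−q)·ln(1−q)`. -/
noncomputable def binaryEntropy (q : ℝ) : ℝ :=
  -(q * Real.log q) - (1 - q) * Real.log (1 - q)

/-!
`Q*` is the Bayes posterior for the chain `Y_{i-1} → Y_i → X_i` whose links are the BSMS(`p`)
kernel and a binary symmetric channel with crossover `D`; the composite link `Y_{i-1} → X_i` then
has crossover `p + D - 2pD = 1 - m`. Hence
`log (Q*(y | y', x) / T_p(y | y')) = log T_D(x | y) - log T_{1-m}(x | y')`, and under the stationary
weights the pair `(X_i, Y_i)` has law `π̄ = T_D / 2` while `(Y_{i-1}, X_i)` has law `T_{1-m} / 2`.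
The two expectations are `-H(D)` and `-H(1-m) = -H(m)`.
-/

open Real

-- The weight `w(y', x, y)` of the statement: the stationary law of `(Y_{i-1}, X_i, Y_i)`.
noncomputable def bsmsJoint (p D : ℝ) (y' x y : Bool) : ℝ :=
  ∑ x' : Bool, bsmsPiBar D (x', y') * bsmsKernel p x x' * bsmsQstar p D y' x y

lemma binaryEntropy_one_sub (q : ℝ) : binaryEntropy (1 - q) = binaryEntropy q := by
  simp only [binaryEntropy, sub_sub_cancel]
  ring

lemma bsmsKernel_pos {q : ℝ} (hq : q ∈ Set.Ioo 0 1) (a b : Bool) : 0 < bsmsKernel q a b := by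
  unfold bsmsKernel
  split_ifs <;> linarith [hq.1, hq.2]

lemma sum_bsmsKernel_right (q : ℝ) (a : Bool) : ∑ b, bsmsKernel q a b = 1 := by
  cases a <;> simp [bsmsKernel]

lemma sum_bsmsKernel_mul_log (q : ℝ) :
    ∑ a, ∑ b, bsmsKernel q a b / 2 * log (bsmsKernel q a b) = -binaryEntropy q := by
  simp only [Fintype.sum_bool, bsmsKernel, binaryEntropy, ↓reduceIte, Bool.true_eq_false,
    Bool.false_eq_true]
  ring

lemma sum_bsmsQstar (p D : ℝ) (y' x : Bool) : ∑ y, bsmsQstar p D y' x y = 1 := by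
  cases y' <;> cases x <;> simp [bsmsQstar]

lemma bsmsJoint_eq_mul_bsmsQstar (p D : ℝ) (y' x y : Bool) :
    bsmsJoint p D y' x y = bsmsKernel (p + D - 2 * p * D) x y' / 2 * bsmsQstar p D y' x y := by
  rw [bsmsJoint, ← Finset.sum_mul]
  congr 1
  cases y' <;> cases x <;> simp [bsmsPiBar, bsmsKernel] <;> ring

lemma sum_bsmsJoint_mul_of_prev_input (p D : ℝ) (g : Bool → Bool → ℝ) :
    ∑ y', ∑ x, ∑ y, bsmsJoint p D y' x y * g x y' =
      ∑ x, ∑ y', bsmsKernel (p + D - 2 * p * D) x y' / 2 * g x y' := by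
  rw [Finset.sum_comm]
  simp only [bsmsJoint_eq_mul_bsmsQstar, mul_comm _ (bsmsQstar _ _ _ _ _), mul_assoc,
    ← Finset.sum_mul, sum_bsmsQstar, one_mul]

section

variable {p D : ℝ}

lemma add_sub_two_mul_mul_mem_Ioo (hp : p ∈ Set.Ioo 0 1) (hD : D ∈ Set.Ioo 0 1) :
    p + D - 2 * p * D ∈ Set.Ioo 0 1 := by
  obtain ⟨hp0, hp1⟩ := hp
  obtain ⟨hD0, hD1⟩ := hD
  constructor
  · nlinarith [mul_pos (sub_pos.2 hp1) hD0, mul_pos hp0 (sub_pos.2 hD1)]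
  · nlinarith [mul_pos (sub_pos.2 hp1) (sub_pos.2 hD1), mul_pos hp0 hD0]

lemma bsmsQstar_eq_bayes (hp : p ∈ Set.Ioo 0 1) (hD : D ∈ Set.Ioo 0 1) (y' x y : Bool) :
    bsmsQstar p D y' x y =
      bsmsKernel p y y' * bsmsKernel D x y / bsmsKernel (p + D - 2 * p * D) x y' := by
  have h1m := add_sub_two_mul_mul_mem_Ioo hp hD
  have hα : bsmsAlpha p D * (1 - p - D + 2 * p * D) = (1 - p) * (1 - D) :=
    div_mul_cancel₀ _ (by linarith [h1m.2])
  have hβ : bsmsBeta p D * (p + D - 2 * p * D) = p * (1 - D) := div_mul_cancel₀ _ h1m.1.ne'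
  rw [eq_div_iff (bsmsKernel_pos h1m _ _).ne']
  cases y' <;> cases x <;> cases y <;>
    simp only [bsmsQstar, bsmsKernel, Bool.true_eq_false, Bool.false_eq_true, ↓reduceIte] <;>
    first
    | linear_combination hα
    | linear_combination -hα
    | linear_combination hβ
    | linear_combination -hβ

lemma log_bsmsQstar_div_bsmsKernel (hp : p ∈ Set.Ioo 0 1) (hD : D ∈ Set.Ioo 0 1)
    (y' x y : Bool) :
    log (bsmsQstar p D y' x y / bsmsKernel p y y') =
      log (bsmsKernel D x y) - log (bsmsKernel (p + D - 2 * p * D) x y') := by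
  have h1m := add_sub_two_mul_mul_mem_Ioo hp hD
  rw [bsmsQstar_eq_bayes hp hD, mul_div_assoc, mul_div_cancel_left₀ _ (bsmsKernel_pos hp _ _).ne',
    log_div (bsmsKernel_pos hD _ _).ne' (bsmsKernel_pos h1m _ _).ne']

lemma bsmsJoint_eq_mul_bsmsKernel (hp : p ∈ Set.Ioo 0 1) (hD : D ∈ Set.Ioo 0 1)
    (y' x y : Bool) :
    bsmsJoint p D y' x y = bsmsKernel p y y' * bsmsKernel D x y / 2 := by
  have h1m := (bsmsKernel_pos (add_sub_two_mul_mul_mem_Ioo hp hD) x y').ne'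
  rw [bsmsJoint_eq_mul_bsmsQstar, bsmsQstar_eq_bayes hp hD, div_mul_eq_mul_div,
    mul_div_cancel₀ _ h1m]

lemma sum_bsmsJoint_mul_of_input_output (hp : p ∈ Set.Ioo 0 1) (hD : D ∈ Set.Ioo 0 1)
    (f : Bool → Bool → ℝ) :
    ∑ y', ∑ x, ∑ y, bsmsJoint p D y' x y * f x y =
      ∑ x, ∑ y, bsmsKernel D x y / 2 * f x y := by
  rw [Finset.sum_comm]
  refine Finset.sum_congr rfl fun x _ => ?_
  rw [Finset.sum_comm]
  refine Finset.sum_congr rfl fun y _ => ?_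
  simp only [bsmsJoint_eq_mul_bsmsKernel hp hD, ← Finset.sum_mul, ← Finset.sum_div,
    sum_bsmsKernel_right, one_mul]

end

/-- **Value of the nonanticipative RDF of the BSMS(p)** (evaluated form of Theorem 9): with
the stationary weights `w(y', x, y) = Σ_{x'} π̄(x', y') T_p(x | x') Q*(y | y', x)`, the
per-letter directed information rate
`Σ_{y', x, y} w(y', x, y) · ln( Q*(y | y', x) / T_p(y | y') )` equals
`H(m) − H(D)` with `m = 1 − p − D + 2pD`. -/
theorem bsms_nonanticipativeRDF_value
    (p D : ℝ) (hp : p ∈ Set.Ioo (0 : ℝ) 1) (hD : D ∈ Set.Ioo (0 : ℝ) (1 / 2)) :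
    ∑ y' : Bool, ∑ x : Bool, ∑ y : Bool,
      (∑ x' : Bool, bsmsPiBar D (x', y') * bsmsKernel p x x' * bsmsQstar p D y' x y)
        * Real.log (bsmsQstar p D y' x y / bsmsKernel p y y')
      = binaryEntropy (1 - p - D + 2 * p * D) - binaryEntropy D := by
  have hD' : D ∈ Set.Ioo 0 1 := ⟨hD.1, hD.2.trans (by norm_num)⟩
  change ∑ y', ∑ x, ∑ y,
    bsmsJoint p D y' x y * log (bsmsQstar p D y' x y / bsmsKernel p y y') = _
  simp only [log_bsmsQstar_div_bsmsKernel hp hD', mul_sub, Finset.sum_sub_distrib]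
  rw [sum_bsmsJoint_mul_of_input_output hp hD' fun x y => log (bsmsKernel D x y),
    sum_bsmsJoint_mul_of_prev_input p D fun x y' => log (bsmsKernel (p + D - 2 * p * D) x y'),
    sum_bsmsKernel_mul_log, sum_bsmsKernel_mul_log, ← binaryEntropy_one_sub (p + D - 2 * p * D),
    show 1 - (p + D - 2 * p * D) = 1 - p - D + 2 * p * D by ring]
  ring
end
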